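/- Let λ ∈ D_r and suppose θ ∈ Θ^λ with θ_s ≠ 0 for some s, and set a_s = s + 1 - θ_s and N_s = #{p' ∈ [a_s, s-1] : θ_{p'} ≠ 0 and p' + 1 - θ_{p'} = a_s}. Then N_s = s - a_s - ℓ_{a_s, s}, where ℓ_{a_s,s} = #([λ_{m_{a_s}}, λ_{m_s}] \ S(λ)). -/

import Mathlib

/-- The three possible relationships between two atypical roots. -/
inductive NQC
  | n : NQC
  | q : NQC
  | c : NQC
deriving DecidableEq

/-- The set `Θ^λ` of Definition 3.4, for an `r`-fold atypical weight whose
nqc-relations are given by `crel` (with `crel s t` for `1 ≤ s ≤ t ≤ r`).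
Tuples are modelled as functions `θ : ℕ → ℕ` supported on `{1,...,r}` with `θ s ≤ s`.
For each `s` with `θ s ≠ 0` the conditions (3.13)-(3.16) must hold:
(3.13) `c_{s-θ_s,s} ≠ c` (omitted when `θ_s = s`) and `c_{s+1-θ_s,s} ≠ n`;
for every `p ∈ [s+1-θ_s, s-1]`:
(3.14) `θ_p ≤ θ_s - s + p`, with equality only if `c_{p,s} = c`;
(3.15) if `c_{p,s} ≠ n` then `θ_p ≠ 0` or there is `p' ∈ [p+1,s]` with `c_{p,p'} = q`
and `θ_{p'} ≥ p'+1-p`,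
(3.16) with the exception that `p = s+1-θ_s < s` and `c_{p,s} = q` forces `θ_p = 0`. -/
def ThetaSet (r : ℕ) (crel : ℕ → ℕ → NQC) : Set (ℕ → ℕ) :=
  {θ | (∀ s, 1 ≤ s → s ≤ r → θ s ≤ s) ∧ (∀ s, ¬(1 ≤ s ∧ s ≤ r) → θ s = 0) ∧
    ∀ s, 1 ≤ s → s ≤ r → θ s ≠ 0 →
      (θ s < s → crel (s - θ s) s ≠ NQC.c) ∧
      crel (s + 1 - θ s) s ≠ NQC.n ∧
      ∀ p, s + 1 - θ s ≤ p → p ≤ s - 1 →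
        (θ p + s ≤ θ s + p) ∧
        (θ p + s = θ s + p → crel p s = NQC.c) ∧
        (crel p s ≠ NQC.n →
          ((p = s + 1 - θ s ∧ crel p s = NQC.q) → θ p = 0) ∧
          (¬(p = s + 1 - θ s ∧ crel p s = NQC.q) →
            θ p ≠ 0 ∨ ∃ p', p + 1 ≤ p' ∧ p' ≤ s ∧ crel p p' = NQC.q ∧ p' + 1 ≤ θ p' + p))}

/-- `ℓ(a,b)` : the number of integers in `[a,b]` not lying in the finite set `S`. -/
noncomputable def gapCount (S : Finset ℤ) (a b : ℤ) : ℕ :=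
  ((Finset.Icc a b).filter (fun z => z ∉ S)).card

/-- The nqc-relation determined by the entry set `S` and atypical entries `x`. -/
noncomputable def crelOf (S : Finset ℤ) (x : ℕ → ℤ) (s t : ℕ) : NQC :=
  if gapCount S (x s) (x t) < t - s then NQC.c
  else if gapCount S (x s) (x t) = t - s then NQC.q
  else NQC.n

private lemma gapCount_split {S : Finset ℤ} {u v w : ℤ} (huv : u ≤ v) (hvw : v ≤ w)
    (hv : v ∈ S) : gapCount S u w = gapCount S u v + gapCount S v w := by
  have h2 : ((Finset.Icc v w).filter (fun z => z ∉ S)).card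
      = ((Finset.Ioc v w).filter (fun z => z ∉ S)).card := by
    rw [Finset.Icc_eq_cons_Ioc hvw, Finset.filter_cons]
    simp [hv]
  unfold gapCount
  have hsplit : Finset.Icc u w = Finset.Icc u v ∪ Finset.Ioc v w := by
    ext z
    simp only [Finset.mem_union, Finset.mem_Icc, Finset.mem_Ioc]
    omega
  rw [hsplit, Finset.filter_union, Finset.card_union_of_disjoint, ← h2]
  rw [Finset.disjoint_left]
  intro z hz1 hz2
  simp only [Finset.mem_filter, Finset.mem_Icc, Finset.mem_Ioc] at hz1 hz2
  omega

private lemma crel_c {S : Finset ℤ} {x : ℕ → ℤ} {u v : ℕ} :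
    crelOf S x u v = NQC.c ↔ gapCount S (x u) (x v) < v - u := by
  unfold crelOf; split_ifs with h1 h2 <;> simp <;> omega

private lemma crel_ne_n {S : Finset ℤ} {x : ℕ → ℤ} {u v : ℕ} :
    crelOf S x u v ≠ NQC.n ↔ gapCount S (x u) (x v) ≤ v - u := by
  unfold crelOf; split_ifs with h1 h2 <;> simp <;> omega

private lemma crel_ne_c {S : Finset ℤ} {x : ℕ → ℤ} {u v : ℕ} :
    crelOf S x u v ≠ NQC.c ↔ v - u ≤ gapCount S (x u) (x v) := by
  unfold crelOf; split_ifs with h1 h2 <;> simp <;> omega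

private lemma crel_q {S : Finset ℤ} {x : ℕ → ℤ} {u v : ℕ} :
    crelOf S x u v = NQC.q → gapCount S (x u) (x v) = v - u := by
  unfold crelOf; split_ifs with h1 h2 <;> simp <;> omega

private lemma cross (f : ℕ → ℤ) (w : ℤ) (u v : ℕ) (huv : u ≤ v)
    (hstep : ∀ i, u ≤ i → i < v → f i ≤ f (i+1) + 1)
    (hu : w ≤ f u) (hv : f v < w) :
    ∃ m, u ≤ m ∧ m < v ∧ f m = w ∧ ∀ j, m < j → j ≤ v → f j < w := by
  classical
  set T := (Finset.Icc u v).filter (fun i => w ≤ f i) with hT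
  have hune : u ∈ T := by
    simp only [hT, Finset.mem_filter, Finset.mem_Icc]
    exact ⟨⟨le_rfl, huv⟩, hu⟩
  have hTne : T.Nonempty := ⟨u, hune⟩
  set m := T.max' hTne with hm
  have hmT : m ∈ T := T.max'_mem hTne
  simp only [hT, Finset.mem_filter, Finset.mem_Icc] at hmT
  obtain ⟨⟨hum, hmv⟩, hwm⟩ := hmT
  have hmv' : m < v := by
    rcases eq_or_lt_of_le hmv with h | h
    · exfalso; rw [h] at hwm; omega
    · exact h
  have htail : ∀ j, m < j → j ≤ v → f j < w := by
    intro j hj1 hj2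
    by_contra h
    push_neg at h
    have : j ∈ T := by
      simp only [hT, Finset.mem_filter, Finset.mem_Icc]
      exact ⟨⟨by omega, hj2⟩, h⟩
    have := Finset.le_max' T j this
    omega
  have hstep' := hstep m hum hmv'
  have := htail (m+1) (by omega) (by omega)
  exact ⟨m, hum, hmv', by omega, htail⟩

/-- `H` function: `H s p = (s - p) - ℓ(p,s)` as an integer. -/
noncomputable def HH (S : Finset ℤ) (x : ℕ → ℤ) (s p : ℕ) : ℤ :=
  (s : ℤ) - p - gapCount S (x p) (x s)

section Main
variable (S : Finset ℤ) (r : ℕ) (x : ℕ → ℤ)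
    (hmono : ∀ i j, 1 ≤ i → i < j → j ≤ r → x i < x j)
    (hmem : ∀ i, 1 ≤ i → i ≤ r → x i ∈ S)

include hmono hmem in
private lemma gap_add {i j k : ℕ} (hi : 1 ≤ i) (hij : i ≤ j) (hjk : j ≤ k) (hk : k ≤ r) :
    gapCount S (x i) (x k) = gapCount S (x i) (x j) + gapCount S (x j) (x k) := by
  have hxij : x i ≤ x j := by
    rcases eq_or_lt_of_le hij with h | h
    · rw [h]
    · exact (hmono i j hi h (le_trans hjk hk)).le
  have hxjk : x j ≤ x k := by
    rcases eq_or_lt_of_le hjk with h | h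
    · rw [h]
    · exact (hmono j k (le_trans hi hij) h hk).le
  exact gapCount_split hxij hxjk (hmem j (le_trans hi hij) (le_trans hjk hk))

include hmono hmem in
private lemma HH_sub {p q s : ℕ} (hp : 1 ≤ p) (hpq : p ≤ q) (hqs : q ≤ s) (hsr : s ≤ r) :
    HH S x s p = HH S x s q + ((q : ℤ) - p - gapCount S (x p) (x q)) := by
  unfold HH
  rw [gap_add S r x hmono hmem hp hpq hqs hsr]
  push_cast
  ring

include hmono hmem in
private lemma lemW (θ : ℕ → ℕ) (hθ : θ ∈ ThetaSet r (crelOf S x))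
    (s : ℕ) (hs : 1 ≤ s) (hsr : s ≤ r) (hθs : θ s ≠ 0)
    (w : ℤ) (hw1 : 1 ≤ w) (hwa : w ≤ HH S x s (s + 1 - θ s)) :
    ∀ t, s + 1 - θ s ≤ t → t ≤ s - 1 → HH S x s t = w →
      (∀ p', t < p' → p' ≤ s → θ p' ≠ 0 → p' + 1 - θ p' ≤ t → HH S x s p' ≠ w) →
      ∃ p, s + 1 - θ s ≤ p ∧ p ≤ s - 1 ∧ θ p ≠ 0 ∧ p + 1 - θ p = s + 1 - θ s ∧
        HH S x s p = w := by
  obtain ⟨hbound, hsupp, hcond⟩ := hθ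
  have hθsle : θ s ≤ s := hbound s hs hsr
  have ha1 : 1 ≤ s + 1 - θ s := by omega
  intro t
  induction t using Nat.strong_induction_on with
  | _ t IH =>
  intro hat hts hHt hNW
  have ht1 : 1 ≤ t := le_trans ha1 hat
  have htlt : t < s := by omega
  have htr : t ≤ r := by omega
  obtain ⟨h13a, h13b, h14⟩ := hcond s hs hsr hθs
  obtain ⟨h14a, h14b, h15⟩ := h14 t hat hts
  -- crel t s = c
  have hgts : gapCount S (x t) (x s) < s - t := by
    unfold HH at hHt; omega
  have hcrelts : crelOf S x t s = NQC.c := crel_c.2 hgts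
  obtain ⟨hexc, hmain⟩ := h15 (by rw [hcrelts]; exact fun h => by cases h)
  have hmain' := hmain (by
    rintro ⟨h1, h2⟩
    rw [hcrelts] at h2
    exact absurd h2 (by decide))
  -- θ t ≠ 0
  have hθt : θ t ≠ 0 := by
    rcases hmain' with h | ⟨p', hp1, hp2, hpq, hpθ⟩
    · exact h
    · exfalso
      have hp's : p' ≠ s := by
        intro h
        rw [h, hcrelts] at hpq
        exact absurd hpq (by decide)
      have hgtp' : gapCount S (x t) (x p') = p' - t := crel_q hpq
      have hsub := HH_sub S r x hmono hmem (p := t) (q := p') (s := s)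
        ht1 (by omega) (by omega) hsr
      have hHp' : HH S x s p' = w := by rw [hsub] at hHt; omega
      exact hNW p' (by omega) hp2 (by omega) (by omega) hHp'
  have hθtle : θ t ≤ t := hbound t ht1 htr
  have hab : s + 1 - θ s ≤ t + 1 - θ t := by clear * - h14a hθsle hθtle; omega
  by_cases hba : t + 1 - θ t = s + 1 - θ s
  · exact ⟨t, hat, hts, hθt, hba, hHt⟩
  · have hblt : s + 1 - θ s < t + 1 - θ t := by omega
    have hb2 : 2 ≤ t + 1 - θ t := by omega
    obtain ⟨h13a', h13b', h14'⟩ := hcond t ht1 htr hθt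
    have hθtlt : θ t < t := by omega
    have hc' := h13a' hθtlt
    have htmθ : t - θ t = t + 1 - θ t - 1 := by omega
    rw [htmθ] at hc'
    have hgb1t : t - (t + 1 - θ t - 1) ≤ gapCount S (x (t + 1 - θ t - 1)) (x t) :=
      crel_ne_c.1 hc'
    have hsubb := HH_sub S r x hmono hmem (p := t + 1 - θ t - 1) (q := t) (s := s)
      (by omega) (by omega) (by omega) hsr
    have hH1 : HH S x s (t + 1 - θ t - 1) ≤ w := by rw [hsubb]; omega
    -- find t'
    obtain ⟨t', hat', ht'b, hHt', htail⟩ :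
        ∃ t', s + 1 - θ s ≤ t' ∧ t' ≤ t + 1 - θ t - 1 ∧ HH S x s t' = w ∧
          ∀ j, t' < j → j ≤ t + 1 - θ t - 1 → HH S x s j < w := by
      rcases eq_or_lt_of_le hH1 with heq | hlt
      · exact ⟨t + 1 - θ t - 1, by omega, le_rfl, heq,
          fun j h1 h2 => absurd (h1.trans_le h2) (lt_irrefl _)⟩
      · obtain ⟨m, hm1, hm2, hm3, hm4⟩ := cross (HH S x s) w (s + 1 - θ s)
          (t + 1 - θ t - 1) (by omega)
          (fun i hi1 hi2 => by
            have := HH_sub S r x hmono hmem (p := i) (q := i + 1) (s := s)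
              (by omega) (by omega) (by omega) hsr
            omega)
          hwa hlt
        exact ⟨m, hm1, by omega, hm3, hm4⟩
    -- NoWit t'
    have hNW' : ∀ p', t' < p' → p' ≤ s → θ p' ≠ 0 → p' + 1 - θ p' ≤ t' →
        HH S x s p' ≠ w := by
      intro p' h1 h2 h3 h4 hH
      rcases lt_or_ge (t + 1 - θ t - 1) p' with hcase | hcase
      · rcases lt_or_ge p' t with hcase2 | hcase2
        · have := (h14' p' (by omega) (by omega)).1
          omega
        · rcases eq_or_lt_of_le hcase2 with hte | hcase3
          · subst hte; omega
          · exact hNW p' hcase3 h2 h3 (by omega) hH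
      · have := htail p' h1 hcase
        omega
    exact IH t' (by omega) (by omega) (by omega) hHt' hNW'



include hmono hmem in
private lemma main_aux (θ : ℕ → ℕ) (hθ : θ ∈ ThetaSet r (crelOf S x)) :
    ∀ n s, 1 ≤ s → s ≤ r → θ s ≠ 0 → θ s ≤ n →
      ((Finset.Icc (s + 1 - θ s) (s - 1)).filter
        (fun p' => θ p' ≠ 0 ∧ p' + 1 - θ p' = s + 1 - θ s)).card
        + gapCount S (x (s + 1 - θ s)) (x s) + (s + 1 - θ s) = s := by
  intro n
  induction n with
  | zero => intro s _ _ h h0; omega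
  | succ n IHn =>
    intro s hs hsr hθs hle
    have hθ' := hθ
    obtain ⟨hbound, hsupp, hcond⟩ := hθ'
    have hθsle : θ s ≤ s := hbound s hs hsr
    have ha1 : 1 ≤ s + 1 - θ s := by omega
    have has : s + 1 - θ s ≤ s := by omega
    obtain ⟨h13a, h13b, h14⟩ := hcond s hs hsr hθs
    have hℓ : gapCount S (x (s + 1 - θ s)) (x s) ≤ s - (s + 1 - θ s) := crel_ne_n.1 h13b
    have hF1 : ∀ p, p ∈ (Finset.Icc (s + 1 - θ s) (s - 1)).filter
        (fun p' => θ p' ≠ 0 ∧ p' + 1 - θ p' = s + 1 - θ s) →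
        ((Finset.Icc (s + 1 - θ s) (p - 1)).filter
          (fun p' => θ p' ≠ 0 ∧ p' + 1 - θ p' = s + 1 - θ s)).card
          + gapCount S (x (s + 1 - θ s)) (x p) + (s + 1 - θ s) = p := by
      intro p hp
      simp only [Finset.mem_filter, Finset.mem_Icc] at hp
      obtain ⟨⟨hap, hps⟩, hθp, hpa⟩ := hp
      have h14p := (h14 p hap hps).1
      have hθplt : θ p ≤ n := by omega
      have := IHn p (by omega) (by omega) hθp hθplt
      rw [hpa] at this
      exact this
    have hB : ∀ p, p ∈ (Finset.Icc (s + 1 - θ s) (s - 1)).filter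
        (fun p' => θ p' ≠ 0 ∧ p' + 1 - θ p' = s + 1 - θ s) →
        gapCount S (x p) (x s) + p + 1 ≤ s := by
      intro p hp
      simp only [Finset.mem_filter, Finset.mem_Icc] at hp
      obtain ⟨⟨hap, hps⟩, hθp, hpa⟩ := hp
      have hθple : θ p ≤ p := hbound p (by omega) (by omega)
      have heq : θ p + s = θ s + p := by omega
      have hc := (h14 p hap hps).2.1 heq
      have := crel_c.1 hc
      omega
    set C := (Finset.Icc (s + 1 - θ s) (s - 1)).filter
        (fun p' => θ p' ≠ 0 ∧ p' + 1 - θ p' = s + 1 - θ s) with hCdef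
    have hupper : C.card + gapCount S (x (s + 1 - θ s)) (x s) + (s + 1 - θ s) ≤ s := by
      rcases Finset.eq_empty_or_nonempty C with hE | hNE
      · rw [hE]; simp; omega
      · have hPC : C.max' hNE ∈ C := C.max'_mem hNE
        obtain ⟨P, hPdef⟩ : ∃ P, P = C.max' hNE := ⟨_, rfl⟩
        rw [← hPdef] at hPC
        have hPm := hPC
        rw [hCdef] at hPm
        simp only [Finset.mem_filter, Finset.mem_Icc] at hPm
        obtain ⟨⟨haP, hPs⟩, hθP, hPa⟩ := hPm
        have hErase : (Finset.Icc (s + 1 - θ s) (P - 1)).filter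
            (fun p' => θ p' ≠ 0 ∧ p' + 1 - θ p' = s + 1 - θ s) = C.erase P := by
          ext q
          simp only [hCdef, Finset.mem_filter, Finset.mem_Icc, Finset.mem_erase]
          constructor
          · rintro ⟨⟨h1, h2⟩, h3⟩
            exact ⟨by omega, ⟨⟨h1, by omega⟩, h3⟩⟩
          · rintro ⟨hne, ⟨⟨h1, h2⟩, h3⟩⟩
            have hqP : q ≤ P := by
              rw [hPdef]
              exact Finset.le_max' C q (by
                rw [hCdef]
                exact Finset.mem_filter.2 ⟨Finset.mem_Icc.2 ⟨h1, h2⟩, h3⟩)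
            exact ⟨⟨h1, by omega⟩, h3⟩
        have hcardE : ((Finset.Icc (s + 1 - θ s) (P - 1)).filter
            (fun p' => θ p' ≠ 0 ∧ p' + 1 - θ p' = s + 1 - θ s)).card = C.card - 1 := by
          rw [hErase, Finset.card_erase_of_mem hPC]
        have hF1P := hF1 P hPC
        rw [hcardE] at hF1P
        have hBP := hB P hPC
        have hadd := gap_add S r x hmono hmem (i := s + 1 - θ s) (j := P) (k := s)
          ha1 haP (by omega) hsr
        have hCpos : 0 < C.card := Finset.card_pos.2 hNE
        omega
    have hHs0 : gapCount S (x s) (x s) = 0 := by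
      unfold gapCount
      rw [Finset.Icc_self, Finset.filter_singleton, if_neg (by simp [hmem s hs hsr])]
      simp
    have hlower : s ≤ C.card + gapCount S (x (s + 1 - θ s)) (x s) + (s + 1 - θ s) := by
      by_contra hcon
      push_neg at hcon
      have hex : ∀ w : ℕ,
          w ∈ Finset.Icc 1 (s - (s + 1 - θ s) - gapCount S (x (s + 1 - θ s)) (x s)) →
          ∃ p, p ∈ C ∧ HH S x s p = (w : ℤ) := by
        intro w hw
        rw [Finset.mem_Icc] at hw
        obtain ⟨hw1, hw2⟩ := hw
        have hwa : (w : ℤ) ≤ HH S x s (s + 1 - θ s) := by unfold HH; omega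
        have hHss : HH S x s s = 0 := by unfold HH; rw [hHs0]; push_cast; ring
        obtain ⟨m, hm1, hm2, hm3, hm4⟩ := cross (HH S x s) (w : ℤ) (s + 1 - θ s) s has
          (fun i hi1 hi2 => by
            have := HH_sub S r x hmono hmem (p := i) (q := i + 1) (s := s)
              (by omega) (by omega) (by omega) hsr
            omega)
          hwa (by omega)
        obtain ⟨p, hp1, hp2, hp3, hp4, hp5⟩ := lemW S r x hmono hmem θ hθ s hs hsr hθs
          (w : ℤ) (by exact_mod_cast hw1) hwa m hm1 (by omega) hm3
          (fun p' h1 h2 _ _ => by have := hm4 p' h1 h2; omega)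
        exact ⟨p, by
          rw [hCdef]
          exact Finset.mem_filter.2 ⟨Finset.mem_Icc.2 ⟨hp1, hp2⟩, hp3, hp4⟩, hp5⟩
      choose! f hf1 hf2 using hex
      have hinj : Set.InjOn f
          (Finset.Icc 1 (s - (s + 1 - θ s) - gapCount S (x (s + 1 - θ s)) (x s))) := by
        intro w1 h1 w2 h2 he
        have e1 := hf2 w1 (Finset.mem_coe.1 h1)
        have e2 := hf2 w2 (Finset.mem_coe.1 h2)
        rw [he] at e1
        omega
      have hcards := Finset.card_le_card_of_injOn f (fun a ha => hf1 a ha) hinj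
      rw [Nat.card_Icc] at hcards
      omega
    omega

end Main

/-- Lemma 5.1(2): for `λ ∈ D_r`, `θ ∈ Θ^λ` and `θ_s ≠ 0`, setting `a_s = s + 1 - θ_s` and
`N_s = #{p' ∈ [a_s, s-1] : θ_{p'} ≠ 0, p' + 1 - θ_{p'} = a_s}`, one has
`N_s = s - a_s - ℓ_{a_s,s}` (stated additively: `N_s + ℓ_{a_s,s} + a_s = s`). -/
theorem N_s_formula (S : Finset ℤ) (r : ℕ) (x : ℕ → ℤ)
    (hmono : ∀ i j, 1 ≤ i → i < j → j ≤ r → x i < x j)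
    (hmem : ∀ i, 1 ≤ i → i ≤ r → x i ∈ S)
    (θ : ℕ → ℕ) (hθ : θ ∈ ThetaSet r (crelOf S x))
    (s : ℕ) (hs : 1 ≤ s) (hsr : s ≤ r) (hθs : θ s ≠ 0) :
    ((Finset.Icc (s + 1 - θ s) (s - 1)).filter
        (fun p' => θ p' ≠ 0 ∧ p' + 1 - θ p' = s + 1 - θ s)).card
      + gapCount S (x (s + 1 - θ s)) (x s) + (s + 1 - θ s) = s := by
  exact main_aux S r x hmono hmem θ hθ (θ s) s hs hsr hθs le_rfl
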